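/- arXiv:2404.12522 — 4 statements merged into one kernel-verified Lean document; each statement's English description precedes it below -/
import Mathlib

section
/- Let A and B be n×n real symmetric positive semidefinite matrices. Then log det(I + B) ≤ log det(I + A) + √n · ‖B − A‖_F. -/
/-!
With `X = 1 + A` and `Y = 1 + B` positive definite, concavity of `log det` gives the tangent-line
bound `log det Y ≤ log det X + tr (X⁻¹ (Y - X))`: conjugating `Y` by `S`, where `X⁻¹ = Sᴴ S`, reduces
it to `log det C ≤ tr C - n` for positive definite `C`, which is `log λ ≤ λ - 1` summed over the
eigenvalues. By Cauchy–Schwarz the trace is at most `‖X⁻¹‖_F ‖B - A‖_F`, and `‖X⁻¹‖_F ≤ √n`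
because `1 - X⁻¹ X⁻¹ = X⁻¹ (X X - 1) X⁻¹` is positive semidefinite, as `X X - 1 = 2A + A²` is.
-/

open Matrix

namespace Matrix

section Frobenius

variable {ι m : Type*} [Fintype ι] [Fintype m]

theorem sum_sq_apply_eq_trace_mul_transpose (M : Matrix ι m ℝ) :
    ∑ i, ∑ j, M i j ^ 2 = (M * Mᵀ).trace := by
  simp [trace, mul_apply, sq]

theorem trace_mul_le_sqrt_mul_sqrt (M : Matrix ι m ℝ) (E : Matrix m ι ℝ) :
    (M * E).trace ≤ √(∑ i, ∑ j, M i j ^ 2) * √(∑ i, ∑ j, E i j ^ 2) := by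
  have hE : ∑ i, ∑ j, E i j ^ 2 = ∑ p : ι × m, E p.2 p.1 ^ 2 := by
    rw [Fintype.sum_prod_type, Finset.sum_comm]
  rw [hE, ← Fintype.sum_prod_type' (fun i j => M i j ^ 2)]
  simpa [trace, mul_apply, Fintype.sum_prod_type] using
    Real.sum_mul_le_sqrt_mul_sqrt Finset.univ (fun p : ι × m => M p.1 p.2) (fun p => E p.2 p.1)

end Frobenius

variable {ι : Type*} [Fintype ι] [DecidableEq ι]

open scoped ComplexOrder MatrixOrder in
theorem PosSemidef.exists_eq_conjTranspose_mul_self {𝕜 : Type*} [RCLike 𝕜] {M : Matrix ι ι 𝕜}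
    (hM : M.PosSemidef) : ∃ S : Matrix ι ι 𝕜, M = Sᴴ * S :=
  CStarAlgebra.nonneg_iff_eq_star_mul_self.mp hM.nonneg

theorem PosDef.log_det_le_trace_sub_card {C : Matrix ι ι ℝ} (hC : C.PosDef) :
    Real.log C.det ≤ C.trace - Fintype.card ι := by
  have hev := hC.eigenvalues_pos
  rw [hC.isHermitian.det_eq_prod_eigenvalues, hC.isHermitian.trace_eq_sum_eigenvalues]
  simp only [RCLike.ofReal_real_eq_id, id]
  rw [Real.log_prod fun i _ => (hev i).ne']
  calc ∑ i, Real.log (hC.isHermitian.eigenvalues i)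
      ≤ ∑ i, (hC.isHermitian.eigenvalues i - 1) :=
        Finset.sum_le_sum fun i _ => Real.log_le_sub_one_of_pos (hev i)
    _ = _ := by simp [Finset.sum_sub_distrib]

theorem PosDef.log_det_le_log_det_add_trace {X Y : Matrix ι ι ℝ} (hX : X.PosDef)
    (hY : Y.PosDef) : Real.log Y.det ≤ Real.log X.det + (X⁻¹ * (Y - X)).trace := by
  obtain ⟨S, hS⟩ := hX.inv.posSemidef.exists_eq_conjTranspose_mul_self
  set C := S * Y * Sᴴ
  have hCdet : C.det = (X.det)⁻¹ * Y.det := by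
    rw [← Ring.inverse_eq_inv', ← det_nonsing_inv, hS, det_mul, det_mul, det_mul,
      det_conjTranspose, star_trivial]
    ring
  have hC : C.PosDef := by
    refine (hY.posSemidef.mul_mul_conjTranspose_same S).posDef_iff_det_ne_zero.mpr ?_
    rw [hCdet]
    exact mul_ne_zero (inv_ne_zero hX.det_pos.ne') hY.det_pos.ne'
  have hCtr : C.trace = (X⁻¹ * (Y - X)).trace + Fintype.card ι := by
    rw [trace_mul_cycle, ← hS, mul_sub, nonsing_inv_mul X hX.det_pos.ne'.isUnit, trace_sub,
      trace_one]
    ring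
  have := hC.log_det_le_trace_sub_card
  rw [hCdet, hCtr, Real.log_mul (inv_ne_zero hX.det_pos.ne') hY.det_pos.ne', Real.log_inv] at this
  linarith

theorem PosSemidef.posSemidef_one_sub_inv_one_add_sq {A : Matrix ι ι ℝ} (hA : A.PosSemidef) :
    (1 - (1 + A)⁻¹ * (1 + A)⁻¹).PosSemidef := by
  have hX : (1 + A).PosDef := PosDef.one.add_posSemidef hA
  set M := (1 + A)⁻¹
  have hMX : M * (1 + A) = 1 := nonsing_inv_mul _ hX.det_pos.ne'.isUnit
  have hXM : (1 + A) * M = 1 := mul_nonsing_inv _ hX.det_pos.ne'.isUnit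
  have hXX : ((1 + A) * (1 + A) - 1).PosSemidef := by
    have : (1 + A) * (1 + A) - 1 = A + A + Aᴴ * A := by
      rw [hA.isHermitian.eq]; noncomm_ring
    rw [this]
    exact (hA.add hA).add (posSemidef_conjTranspose_mul_self A)
  have key : 1 - M * M = M * ((1 + A) * (1 + A) - 1) * Mᴴ := by
    rw [hX.inv.isHermitian.eq]
    calc 1 - M * M = (M * (1 + A)) * ((1 + A) * M) - M * M := by rw [hMX, hXM, one_mul]
      _ = _ := by noncomm_ring
  rw [key]
  exact hXX.mul_mul_conjTranspose_same M

theorem PosSemidef.sum_sq_inv_one_add_apply_le_card {A : Matrix ι ι ℝ} (hA : A.PosSemidef) :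
    ∑ i, ∑ j, (1 + A)⁻¹ i j ^ 2 ≤ Fintype.card ι := by
  have hM : ((1 + A)⁻¹)ᵀ = (1 + A)⁻¹ := by
    rw [← conjTranspose_eq_transpose_of_trivial]
    exact (PosDef.one.add_posSemidef hA).inv.isHermitian.eq
  have := hA.posSemidef_one_sub_inv_one_add_sq.trace_nonneg
  rw [trace_sub, trace_one] at this
  rw [sum_sq_apply_eq_trace_mul_transpose, hM]
  linarith

end Matrix

/-- for `n × n` real symmetric PSD matrices `A`, `B`,
`log det (I + B) ≤ log det (I + A) + √n * ‖B - A‖_F`. -/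
theorem logdet_perturbation_bound (n : ℕ) (A B : Matrix (Fin n) (Fin n) ℝ)
    (hA : A.PosSemidef) (hB : B.PosSemidef) :
    Real.log ((1 + B).det) ≤
      Real.log ((1 + A).det) + Real.sqrt n * Real.sqrt (∑ i, ∑ j, ((B - A) i j) ^ 2) := by
  have hX : (1 + A).PosDef := PosDef.one.add_posSemidef hA
  have hY : (1 + B).PosDef := PosDef.one.add_posSemidef hB
  have hfrob : √(∑ i, ∑ j, (1 + A)⁻¹ i j ^ 2) ≤ √n := by
    simpa using Real.sqrt_le_sqrt hA.sum_sq_inv_one_add_apply_le_card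
  calc Real.log (1 + B).det
      ≤ Real.log (1 + A).det + ((1 + A)⁻¹ * (B - A)).trace := by
        simpa using hX.log_det_le_log_det_add_trace hY
    _ ≤ Real.log (1 + A).det +
          √(∑ i, ∑ j, (1 + A)⁻¹ i j ^ 2) * √(∑ i, ∑ j, (B - A) i j ^ 2) := by
        gcongr
        exact trace_mul_le_sqrt_mul_sqrt _ _
    _ ≤ _ := by gcongr
end

section
/- Let K and p be positive integers, u, a, b ∈ ℝᴷ with a ≠ u, θ, θ' ∈ ℝᵖ, J₁, …, J_K ∈ ℝᵖ, and κ ≥ 0. Suppose |b_k − a_k − ⟨J_k, θ' − θ⟩| ≤ κ for every k ∈ {1,…,K}. Set g = (a − u)/‖a − u‖₂. Then ‖b − u‖₂ ≥ ‖a − u‖₂ + Σ_{k=1}^{K} g_k·⟨J_k, θ' − θ⟩ − K·κ. -/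
open scoped RealInnerProductSpace

/-
The normalized vector `g = ‖a - u‖⁻¹ • (a - u)` is a subgradient of `x ↦ ‖x - u‖` at `a`:
`⟪g, a - u⟫ = ‖a - u‖` and `‖g‖ ≤ 1`, so Cauchy–Schwarz gives
`‖b - u‖ ≥ ⟪g, b - u⟫ = ‖a - u‖ + ⟪g, b - a⟫`. Coordinatewise, `b - a` is within `κ` of the
linear prediction `⟪J k, θ' - θ⟫`, and `|g k| ≤ 1`, so replacing `b - a` by the prediction
costs at most `κ` per coordinate.
-/

theorem real_inner_inv_norm_smul_self {F : Type*} [NormedAddCommGroup F] [InnerProductSpace ℝ F]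
    (x : F) : ⟪‖x‖⁻¹ • x, x⟫ = ‖x‖ := by
  rw [real_inner_smul_left, real_inner_self_eq_norm_mul_norm]
  rcases eq_or_ne ‖x‖ 0 with hx | hx
  · simp [hx]
  · field_simp

theorem sum_mul_sub_card_mul_le_inner {ι : Type*} [Fintype ι] {g d : EuclideanSpace ℝ ι}
    (hg : ‖g‖ ≤ 1) {c : ι → ℝ} {κ : ℝ} (hdc : ∀ k, |d k - c k| ≤ κ) :
    ∑ k, g k * c k - Fintype.card ι * κ ≤ ⟪g, d⟫ := by
  have hterm : ∀ k, g k * c k - κ ≤ g k * d k := by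
    intro k
    have hgk : |g k| ≤ 1 := by simpa using (PiLp.norm_apply_le g k).trans hg
    have : |g k * d k - g k * c k| ≤ κ := by
      rw [← mul_sub, abs_mul]
      exact mul_le_of_le_one_left (abs_nonneg _) hgk |>.trans (hdc k)
    linarith [(abs_le.mp this).1]
  calc ∑ k, g k * c k - Fintype.card ι * κ = ∑ k, (g k * c k - κ) := by
        simp [Finset.sum_sub_distrib]
    _ ≤ ∑ k, g k * d k := Finset.sum_le_sum fun k _ => hterm k
    _ = ⟪g, d⟫ := by simp [PiLp.inner_apply, mul_comm]

theorem almost_convexity_norm_general (K p : ℕ)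
    (u a b : EuclideanSpace ℝ (Fin K))
    (θ θ' : EuclideanSpace ℝ (Fin p)) (J : Fin K → EuclideanSpace ℝ (Fin p))
    (κ : ℝ)
    (hlin : ∀ k : Fin K, |b k - a k - ⟪J k, θ' - θ⟫| ≤ κ) :
    ‖a - u‖ + (∑ k : Fin K, (‖a - u‖⁻¹ • (a - u)) k * ⟪J k, θ' - θ⟫) - K * κ ≤
      ‖b - u‖ := by
  set g := ‖a - u‖⁻¹ • (a - u)
  have hg : ‖g‖ ≤ 1 := by simpa using inv_norm_smul_mem_unitClosedBall (a - u)
  have hpred := sum_mul_sub_card_mul_le_inner hg (d := b - a) (by simpa using hlin)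
  calc ‖a - u‖ + (∑ k, g k * ⟪J k, θ' - θ⟫) - K * κ
      ≤ ⟪g, a - u⟫ + ⟪g, b - a⟫ := by
        rw [Fintype.card_fin] at hpred
        rw [real_inner_inv_norm_smul_self]
        linarith
    _ = ⟪g, b - u⟫ := by rw [← inner_add_right, sub_add_sub_cancel']
    _ ≤ ‖g‖ * ‖b - u‖ := real_inner_le_norm _ _
    _ ≤ ‖b - u‖ := mul_le_of_le_one_left (norm_nonneg _) hg

/-- almost convexity, abstract form: if `|b_k - a_k - ⟨J_k, θ' - θ⟩| ≤ κ`
for all `k`, `a ≠ u`, and `g = (a - u)/‖a - u‖₂`, then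
`‖b - u‖₂ ≥ ‖a - u‖₂ + ∑_k g_k ⟨J_k, θ' - θ⟩ - K κ`. -/
theorem almost_convexity_norm (K p : ℕ) (hK : 0 < K) (hp : 0 < p)
    (u a b : EuclideanSpace ℝ (Fin K)) (hau : a ≠ u)
    (θ θ' : EuclideanSpace ℝ (Fin p)) (J : Fin K → EuclideanSpace ℝ (Fin p))
    (κ : ℝ) (hκ : 0 ≤ κ)
    (hlin : ∀ k : Fin K, |b k - a k - ⟪J k, θ' - θ⟫| ≤ κ) :
    ‖a - u‖ + (∑ k : Fin K, (‖a - u‖⁻¹ • (a - u)) k * ⟪J k, θ' - θ⟫) - K * κ ≤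
      ‖b - u‖ :=
  almost_convexity_norm_general K p u a b θ θ' J κ hlin
end

section
/- Let K and p be positive integers, u, a, b ∈ ℝᴷ, θ, θ' ∈ ℝᵖ, J₁, …, J_K ∈ ℝᵖ, and κ ∈ [0, 1/4]. Suppose |b_k − a_k − ⟨J_k, θ' − θ⟩| ≤ κ for every k ∈ {1,…,K}. Then ‖b − u‖₂²/2 ≥ ‖a − u‖₂²/4 + Σ_{k=1}^{K} (a_k − u_k)·⟨J_k, θ' − θ⟩ − κK/4. -/
open scoped RealInnerProductSpace

/-!
Coordinatewise, with `x = a - u`, `g` the linear prediction and `e = b - a - g`,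
`(x + g + e)² / 2 - x² / 4 - x g = (x / 2 + e)² - e² + (g + e)² / 2 ≥ -e²`, and `e² ≤ κ² ≤ κ / 4`
because `|e| ≤ κ ≤ 1 / 4`. Summing over the `K` coordinates gives the claim.
-/

lemma sq_le_div_four_of_abs_le {e κ : ℝ} (he : |e| ≤ κ) (hκ : κ ≤ 1 / 4) : e ^ 2 ≤ κ / 4 := by
  have hκ0 : 0 ≤ κ := (abs_nonneg e).trans he
  calc e ^ 2 = |e| ^ 2 := (sq_abs e).symm
    _ ≤ κ ^ 2 := pow_le_pow_left₀ (abs_nonneg e) he 2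
    _ ≤ κ / 4 := by nlinarith

lemma sq_div_four_add_mul_sub_le_sq_div_two {u a b g κ : ℝ} (hlin : |b - a - g| ≤ κ)
    (hκ : κ ≤ 1 / 4) : (a - u) ^ 2 / 4 + (a - u) * g - κ / 4 ≤ (b - u) ^ 2 / 2 := by
  have he := sq_le_div_four_of_abs_le hlin hκ
  nlinarith [sq_nonneg ((a - u) / 2 + (b - a - g)), sq_nonneg (b - a)]

lemma EuclideanSpace.norm_sub_sq_div_four_add_sum_sub_le {ι : Type*} [Fintype ι]
    (u a b : EuclideanSpace ℝ ι) (g : ι → ℝ) {κ : ℝ} (hκ : κ ≤ 1 / 4)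
    (hlin : ∀ i, |b i - a i - g i| ≤ κ) :
    ‖a - u‖ ^ 2 / 4 + ∑ i, (a i - u i) * g i - κ * Fintype.card ι / 4 ≤ ‖b - u‖ ^ 2 / 2 := by
  simp only [EuclideanSpace.real_norm_sq_eq, PiLp.sub_apply]
  have hsum := Finset.sum_le_sum fun i (_ : i ∈ Finset.univ) =>
    sq_div_four_add_mul_sub_le_sq_div_two (u := u i) (hlin i) hκ
  simp only [Finset.sum_sub_distrib, Finset.sum_add_distrib, ← Finset.sum_div,
    Finset.sum_const, Finset.card_univ, nsmul_eq_mul] at hsum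
  linarith

theorem almost_convexity_sq_general (K p : ℕ)
    (u a b : EuclideanSpace ℝ (Fin K))
    (θ θ' : EuclideanSpace ℝ (Fin p)) (J : Fin K → EuclideanSpace ℝ (Fin p))
    (κ : ℝ) (hκ : κ ∈ Set.Icc (0 : ℝ) (1/4))
    (hlin : ∀ k : Fin K, |b k - a k - ⟪J k, θ' - θ⟫| ≤ κ) :
    ‖a - u‖ ^ 2 / 4 + (∑ k : Fin K, (a k - u k) * ⟪J k, θ' - θ⟫) - κ * K / 4 ≤
      ‖b - u‖ ^ 2 / 2 := by
  simpa using EuclideanSpace.norm_sub_sq_div_four_add_sum_sub_le u a b _ hκ.2 hlin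

/-- almost convexity for the squared loss, abstract form: if
`|b_k - a_k - ⟨J_k, θ' - θ⟩| ≤ κ` for all `k` with `κ ∈ [0, 1/4]`, then
`‖b - u‖₂²/2 ≥ ‖a - u‖₂²/4 + ∑_k (a_k - u_k) ⟨J_k, θ' - θ⟩ - κ K / 4`. -/
theorem almost_convexity_sq (K p : ℕ) (hK : 0 < K) (hp : 0 < p)
    (u a b : EuclideanSpace ℝ (Fin K))
    (θ θ' : EuclideanSpace ℝ (Fin p)) (J : Fin K → EuclideanSpace ℝ (Fin p))
    (κ : ℝ) (hκ : κ ∈ Set.Icc (0 : ℝ) (1/4))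
    (hlin : ∀ k : Fin K, |b k - a k - ⟪J k, θ' - θ⟫| ≤ κ) :
    ‖a - u‖ ^ 2 / 4 + (∑ k : Fin K, (a k - u k) * ⟪J k, θ' - θ⟫) - κ * K / 4 ≤
      ‖b - u‖ ^ 2 / 2 :=
  almost_convexity_sq_general K p u a b θ θ' J κ hκ hlin
end

section
/- Let p be a positive integer, T a positive integer, η > 0, c > 0 with η·c ≤ 1/4, ε ≥ 0, and θ' ∈ ℝᵖ. Let ℓ₁, …, ℓ_T : ℝᵖ → ℝ be nonnegative functions, g₁, …, g_T ∈ ℝᵖ, and θ₁, …, θ_{T+1} ∈ ℝᵖ satisfy, for all t ∈ {1,…,T}: θ_{t+1} = θ_t − η·g_t, ‖g_t‖₂² ≤ c·ℓ_t(θ_t), and ℓ_t(θ_t)/4 − ℓ_t(θ')/2 ≤ ⟨g_t, θ_t − θ'⟩ + ε. Then (1/8)·Σ_{t=1}^{T} ℓ_t(θ_t) ≤ (1/2)·Σ_{t=1}^{T} ℓ_t(θ') + ‖θ₁ − θ'‖₂²/(2η) + T·ε. -/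
/-!
Expanding `‖θₜ₊₁ - θ'‖² = ‖θₜ - θ'‖² - 2η⟪gₜ, θₜ - θ'⟫ + η²‖gₜ‖²` and telescoping bounds
`∑ ⟪gₜ, θₜ - θ'⟫` by `‖θ₁ - θ'‖²/(2η) + (η/2) ∑ ‖gₜ‖²`, the usual online gradient descent
estimate. The self-bound `‖gₜ‖² ≤ c ℓₜ(θₜ)` with `ηc ≤ 1/4` makes the last term at most
`(1/8) ∑ ℓₜ(θₜ)`, which the `(1/4) ∑ ℓₜ(θₜ)` supplied by the almost-convexity hypothesis absorbs.
-/

open scoped RealInnerProductSpace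

open Finset

section GradientStep

variable {F : Type*} [NormedAddCommGroup F] [InnerProductSpace ℝ F]

lemma real_inner_sub_eq_of_step {η : ℝ} (hη : η ≠ 0) (x y g : F) :
    ⟪g, x - y⟫ = (‖x - y‖ ^ 2 - ‖x - η • g - y‖ ^ 2) / (2 * η) + η / 2 * ‖g‖ ^ 2 := by
  rw [show x - η • g - y = (x - y) - η • g by abel, norm_sub_sq_real (x - y),
    real_inner_smul_right, norm_smul, Real.norm_eq_abs, mul_pow, sq_abs, real_inner_comm]
  field_simp
  ring

lemma sum_real_inner_le_of_gradient_steps {η : ℝ} (hη : 0 < η) (T : ℕ) (y : F) (g θ : ℕ → F)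
    (hstep : ∀ t ∈ Icc 1 T, θ (t + 1) = θ t - η • g t) :
    ∑ t ∈ Icc 1 T, ⟪g t, θ t - y⟫ ≤
      ‖θ 1 - y‖ ^ 2 / (2 * η) + η / 2 * ∑ t ∈ Icc 1 T, ‖g t‖ ^ 2 := by
  have hterm : ∀ t ∈ Icc 1 T, ⟪g t, θ t - y⟫ =
      -(‖θ (t + 1) - y‖ ^ 2 - ‖θ t - y‖ ^ 2) / (2 * η) + η / 2 * ‖g t‖ ^ 2 := by
    intro t ht
    rw [hstep t ht, real_inner_sub_eq_of_step hη.ne', neg_sub]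
  have htelescope : ∑ t ∈ Icc 1 T, (‖θ (t + 1) - y‖ ^ 2 - ‖θ t - y‖ ^ 2) =
      ‖θ (T + 1) - y‖ ^ 2 - ‖θ 1 - y‖ ^ 2 := by
    rw [← Ico_add_one_right_eq_Icc, sum_Ico_sub (fun t => ‖θ t - y‖ ^ 2) (by omega)]
  rw [sum_congr rfl hterm, sum_add_distrib, ← sum_div, sum_neg_distrib, htelescope, ← mul_sum]
  gcongr
  rw [neg_sub]
  have hlast : 0 ≤ ‖θ (T + 1) - y‖ ^ 2 := by positivity
  linarith

end GradientStep

theorem gd_self_bounded_telescoping_general (p T : ℕ)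
    (η c ε : ℝ) (hη : 0 < η) (hηc : η * c ≤ 1 / 4)
    (θ' : EuclideanSpace ℝ (Fin p))
    (ℓ : ℕ → EuclideanSpace ℝ (Fin p) → ℝ)
    (hnn : ∀ t x, 0 ≤ ℓ t x)
    (g : ℕ → EuclideanSpace ℝ (Fin p))
    (θ : ℕ → EuclideanSpace ℝ (Fin p))
    (hstep : ∀ t ∈ Finset.Icc 1 T, θ (t + 1) = θ t - η • g t)
    (hgb : ∀ t ∈ Finset.Icc 1 T, ‖g t‖ ^ 2 ≤ c * ℓ t (θ t))
    (hconv : ∀ t ∈ Finset.Icc 1 T, ℓ t (θ t) / 4 - ℓ t θ' / 2 ≤ ⟪g t, θ t - θ'⟫ + ε) :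
    (1 / 8 : ℝ) * ∑ t ∈ Finset.Icc 1 T, ℓ t (θ t) ≤
      (1 / 2 : ℝ) * ∑ t ∈ Finset.Icc 1 T, ℓ t θ' +
        ‖θ 1 - θ'‖ ^ 2 / (2 * η) + T * ε := by
  have hregret := sum_real_inner_le_of_gradient_steps hη T θ' g θ hstep
  have hlower : ∑ t ∈ Icc 1 T, (ℓ t (θ t) / 4 - ℓ t θ' / 2 - ε) ≤
      ∑ t ∈ Icc 1 T, ⟪g t, θ t - θ'⟫ :=
    sum_le_sum fun t ht => by linarith [hconv t ht]
  have hgrad : η / 2 * ∑ t ∈ Icc 1 T, ‖g t‖ ^ 2 ≤ 1 / 8 * ∑ t ∈ Icc 1 T, ℓ t (θ t) := by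
    rw [mul_sum, mul_sum]
    refine sum_le_sum fun t ht => ?_
    have hℓ := hnn t (θ t)
    nlinarith [mul_le_mul_of_nonneg_left (hgb t ht) hη.le]
  simp only [sum_sub_distrib, sum_const, Nat.card_Icc, add_tsub_cancel_right, nsmul_eq_mul,
    ← sum_div] at hlower
  linarith

/-- gradient descent with self-bounded gradients: with steps
`θ_{t+1} = θ_t - η g_t`, `‖g_t‖² ≤ c ℓ_t(θ_t)`, `η c ≤ 1/4`, nonnegative losses, and
`ℓ_t(θ_t)/4 - ℓ_t(θ')/2 ≤ ⟨g_t, θ_t - θ'⟩ + ε`, one has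
`(1/8) ∑_t ℓ_t(θ_t) ≤ (1/2) ∑_t ℓ_t(θ') + ‖θ₁ - θ'‖²/(2η) + T ε`. -/
theorem gd_self_bounded_telescoping (p T : ℕ) (hp : 0 < p) (hT : 0 < T)
    (η c ε : ℝ) (hη : 0 < η) (hc : 0 < c) (hηc : η * c ≤ 1 / 4) (hε : 0 ≤ ε)
    (θ' : EuclideanSpace ℝ (Fin p))
    (ℓ : ℕ → EuclideanSpace ℝ (Fin p) → ℝ)
    (hnn : ∀ t x, 0 ≤ ℓ t x)
    (g : ℕ → EuclideanSpace ℝ (Fin p))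
    (θ : ℕ → EuclideanSpace ℝ (Fin p))
    (hstep : ∀ t ∈ Finset.Icc 1 T, θ (t + 1) = θ t - η • g t)
    (hgb : ∀ t ∈ Finset.Icc 1 T, ‖g t‖ ^ 2 ≤ c * ℓ t (θ t))
    (hconv : ∀ t ∈ Finset.Icc 1 T, ℓ t (θ t) / 4 - ℓ t θ' / 2 ≤ ⟪g t, θ t - θ'⟫ + ε) :
    (1 / 8 : ℝ) * ∑ t ∈ Finset.Icc 1 T, ℓ t (θ t) ≤
      (1 / 2 : ℝ) * ∑ t ∈ Finset.Icc 1 T, ℓ t θ' +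
        ‖θ 1 - θ'‖ ^ 2 / (2 * η) + T * ε :=
  gd_self_bounded_telescoping_general p T η c ε hη hηc θ' ℓ hnn g θ hstep hgb hconv
end
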